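/- arXiv:1401.0328 — 5 statements merged into one kernel-verified Lean document; each statement's English description precedes it below -/
import Mathlib

section
/- Let σ : [a,b] → [0,1] be strictly increasing with σ(t₂) − σ(t₁) ≥ (t₂−t₁)/L for all t₁ < t₂. Then there exists a unique increasing continuous surjective function φ₀ : [0,1] → [a,b] such that φ₀(σ(t)) = t for all t ∈ [a,b], and this φ₀ is L-Lipschitz continuous. -/
/-!
The inverse is forced to be the generalized inverse `φ₀ s = sup {t ∈ [a,b] | σ t ≤ s}`:
any monotone `ψ` with `ψ ∘ σ = id` is squeezed onto it from both sides, using only that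
`σ t ≤ s` for `t ≤ φ₀ s` and `s < σ t` for `t > φ₀ s`. The growth bound on `σ` makes
`φ₀` increase by at most `L (s₂ - s₁)` between `s₁ ≤ s₂`, hence `L`-Lipschitz, and the
intermediate value theorem between `σ a` and `σ b` gives surjectivity onto `[a,b]`.
-/

open Set

section SupInverse

variable {α β : Type*} [ConditionallyCompleteLinearOrder α] [LinearOrder β]
  {σ : α → β} {a b c t : α} {s : β}

/-- `a` is inserted so that the supremum stays in `[a, b]` also when no `t` has `σ t ≤ s`. -/
noncomputable def supInverse (σ : α → β) (a b : α) (s : β) : α :=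
  sSup (insert a {t ∈ Icc a b | σ t ≤ s})

lemma bddAbove_supInverseSet : BddAbove (insert a {t ∈ Icc a b | σ t ≤ s}) :=
  (bddAbove_Icc.mono (sep_subset _ _)).insert a

lemma left_le_supInverse : a ≤ supInverse σ a b s :=
  le_csSup bddAbove_supInverseSet (mem_insert a _)

lemma le_supInverse (ht : t ∈ Icc a b) (hts : σ t ≤ s) : t ≤ supInverse σ a b s :=
  le_csSup bddAbove_supInverseSet (Or.inr ⟨ht, hts⟩)

lemma supInverse_le (hac : a ≤ c) (h : ∀ t ∈ Icc a b, σ t ≤ s → t ≤ c) :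
    supInverse σ a b s ≤ c :=
  csSup_le (insert_nonempty _ _) <| by
    rintro t (rfl | ⟨ht, hts⟩)
    exacts [hac, h t ht hts]

lemma lt_of_supInverse_lt (ht : t ∈ Icc a b) (h : supInverse σ a b s < t) : s < σ t :=
  lt_of_not_ge fun hts => (le_supInverse ht hts).not_gt h

lemma supInverse_mem_Icc (hab : a ≤ b) : supInverse σ a b s ∈ Icc a b :=
  ⟨left_le_supInverse, supInverse_le hab fun _ ht _ => ht.2⟩

lemma monotone_supInverse : Monotone (supInverse σ a b) :=
  fun _ _ h => supInverse_le left_le_supInverse fun _ ht hts => le_supInverse ht (hts.trans h)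

lemma StrictMonoOn.supInverse_apply (hσ : StrictMonoOn σ (Icc a b)) (ht : t ∈ Icc a b) :
    supInverse σ a b (σ t) = t :=
  le_antisymm (supInverse_le ht.1 fun _ ht' h => (hσ.le_iff_le ht' ht).1 h) (le_supInverse ht le_rfl)

lemma eqOn_supInverse [DenselyOrdered α] {I : Set β} {ψ : β → α}
    (hσ : MapsTo σ (Icc a b) I) (hψ : MonotoneOn ψ I) (hψI : MapsTo ψ I (Icc a b))
    (hψσ : ∀ t ∈ Icc a b, ψ (σ t) = t) : EqOn ψ (supInverse σ a b) I := by
  intro s hs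
  refine le_antisymm (not_lt.1 fun hlt => ?_) ?_
  · obtain ⟨c, hc, hcψ⟩ := exists_between hlt
    have hcI : c ∈ Icc a b := ⟨left_le_supInverse.trans hc.le, hcψ.le.trans (hψI hs).2⟩
    have := hψ hs (hσ hcI) (lt_of_supInverse_lt hcI hc).le
    rw [hψσ c hcI] at this
    exact this.not_gt hcψ
  · exact supInverse_le (hψI hs).1 fun t ht hts => hψσ t ht ▸ hψ (hσ ht) hs hts

end SupInverse

section Real

variable {σ : ℝ → ℝ} {a b L : ℝ}

lemma supInverse_le_add_mul (hL : 0 < L)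
    (hgrow : ∀ t₁ ∈ Icc a b, ∀ t₂ ∈ Icc a b, t₁ < t₂ → (t₂ - t₁) / L ≤ σ t₂ - σ t₁)
    {s₁ s₂ : ℝ} (h : s₁ ≤ s₂) :
    supInverse σ a b s₂ ≤ supInverse σ a b s₁ + L * (s₂ - s₁) := by
  have hgap : 0 ≤ L * (s₂ - s₁) := mul_nonneg hL.le (sub_nonneg.2 h)
  refine supInverse_le (left_le_supInverse.trans (le_add_of_nonneg_right hgap)) fun t ht hts => ?_
  rw [← sub_le_iff_le_add]
  refine le_of_forall_gt_imp_ge_of_dense fun c hc => ?_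
  rcases le_or_gt t c with htc | hct
  · linarith
  have hcI : c ∈ Icc a b := ⟨left_le_supInverse.trans hc.le, hct.le.trans ht.2⟩
  have hσc := lt_of_supInverse_lt hcI hc
  have hdiff := (div_le_iff₀ hL).1 (hgrow c hcI t ht hct)
  have : (σ t - σ c) * L ≤ (s₂ - s₁) * L := mul_le_mul_of_nonneg_right (by linarith) hL.le
  linarith

lemma lipschitzWith_supInverse (hL : 0 < L)
    (hgrow : ∀ t₁ ∈ Icc a b, ∀ t₂ ∈ Icc a b, t₁ < t₂ → (t₂ - t₁) / L ≤ σ t₂ - σ t₁) :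
    LipschitzWith (Real.toNNReal L) (supInverse σ a b) := by
  refine LipschitzWith.of_le_add_mul _ fun x y => ?_
  rw [Real.coe_toNNReal L hL.le, Real.dist_eq]
  rcases le_total x y with hxy | hyx
  · exact (monotone_supInverse hxy).trans (le_add_of_nonneg_right (by positivity))
  · rw [abs_of_nonneg (sub_nonneg.2 hyx)]
    exact supInverse_le_add_mul hL hgrow hyx

lemma image_supInverse_eq_Icc {I : Set ℝ} (hab : a ≤ b) (hσ : StrictMonoOn σ (Icc a b))
    (hσI : MapsTo σ (Icc a b) I) (hI : I.OrdConnected)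
    (hcont : ContinuousOn (supInverse σ a b) I) :
    supInverse σ a b '' I = Icc a b := by
  have ha : a ∈ Icc a b := left_mem_Icc.2 hab
  have hb : b ∈ Icc a b := right_mem_Icc.2 hab
  have hsub : Icc (σ a) (σ b) ⊆ I := hI.out (hσI ha) (hσI hb)
  refine Subset.antisymm (image_subset_iff.2 fun _ _ => supInverse_mem_Icc hab) ?_
  calc Icc a b = Icc (supInverse σ a b (σ a)) (supInverse σ a b (σ b)) := by
        rw [hσ.supInverse_apply ha, hσ.supInverse_apply hb]
    _ ⊆ supInverse σ a b '' Icc (σ a) (σ b) :=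
        intermediate_value_Icc (hσ.monotoneOn ha hb hab) (hcont.mono hsub)
    _ ⊆ supInverse σ a b '' I := image_mono hsub

end Real

/-- For a strictly increasing `σ : [a,b] → [0,1]` with lower growth bound
`σ t₂ - σ t₁ ≥ (t₂-t₁)/L`, there is a unique (on `[0,1]`) increasing continuous
surjective `φ₀ : [0,1] → [a,b]` with `φ₀ ∘ σ = id` on `[a,b]`, and it is
`L`-Lipschitz. -/
theorem stmt_4 (a b L : ℝ) (hab : a < b) (hL : 0 < L)
    (σ : ℝ → ℝ) (hσmap : MapsTo σ (Icc a b) (Icc 0 1))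
    (hσmono : StrictMonoOn σ (Icc a b))
    (hσgrow : ∀ t₁ ∈ Icc a b, ∀ t₂ ∈ Icc a b, t₁ < t₂ → σ t₂ - σ t₁ ≥ (t₂ - t₁) / L) :
    ∃ φ₀ : ℝ → ℝ,
      (MonotoneOn φ₀ (Icc 0 1) ∧ ContinuousOn φ₀ (Icc 0 1) ∧
        φ₀ '' (Icc 0 1) = Icc a b ∧ (∀ t ∈ Icc a b, φ₀ (σ t) = t)) ∧
      LipschitzOnWith (Real.toNNReal L) φ₀ (Icc 0 1) ∧
      ∀ ψ : ℝ → ℝ,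
        (MonotoneOn ψ (Icc 0 1) ∧ ContinuousOn ψ (Icc 0 1) ∧
          ψ '' (Icc 0 1) = Icc a b ∧ (∀ t ∈ Icc a b, ψ (σ t) = t)) →
        EqOn ψ φ₀ (Icc 0 1) := by
  have hlip : LipschitzOnWith (Real.toNNReal L) (supInverse σ a b) (Icc 0 1) :=
    (lipschitzWith_supInverse hL hσgrow).lipschitzOnWith
  refine ⟨supInverse σ a b, ⟨monotone_supInverse.monotoneOn _, hlip.continuousOn,
    image_supInverse_eq_Icc hab.le hσmono hσmap ordConnected_Icc hlip.continuousOn,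
    fun _ ht => hσmono.supInverse_apply ht⟩, hlip, ?_⟩
  rintro ψ ⟨hψmono, -, hψimg, hψσ⟩
  exact eqOn_supInverse hσmap hψmono (hψimg ▸ mapsTo_image ψ _) hψσ
end

section
/- Let (σ_k) be a sequence of strictly increasing continuous surjective functions from [a,b] onto [0,1] whose inverses φ_{0,k} = σ_k^{-1} are equi-L-Lipschitz, and suppose σ_k(t) → σ(t) for all continuity points t of a strictly increasing function σ : [a,b] → [0,1]. If the φ_{0,k} converge uniformly to some L-Lipschitz function φ₀ : [0,1] → [a,b], then φ₀(σ(t)) = t for every t ∈ [a,b] (including discontinuity points of σ). -/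
/-!
At a continuity point `t` of `σ` we have `σ_k t → σ t`, so uniform convergence and continuity of
`φ₀` give `φ₀ (σ t) = lim φ_{0,k} (σ_k t) = t`. The `φ_{0,k}` are monotone, hence so is their
limit `φ₀`, and the monotone `σ` is continuous off a countable set. An arbitrary `t` is then
squeezed between continuity points `u < t < v`, which gives `u ≤ φ₀ (σ t) ≤ v`.
-/

open Set Filter Topology

theorem TendstoUniformlyOn.apply_eq_of_eventually_apply_eq {ι α β : Type*} [TopologicalSpace α]
    [UniformSpace β] [T2Space β] {p : Filter ι} [p.NeBot] {F : ι → α → β} {f : α → β}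
    {s : Set α} {g : ι → α} {x : α} {c : β} (h : TendstoUniformlyOn F f p s)
    (hf : ContinuousWithinAt f s x) (hg : Tendsto g p (𝓝[s] x))
    (hc : ∀ᶠ i in p, F i (g i) = c) : f x = c :=
  tendsto_nhds_unique (h.tendsto_comp hf hg) (tendsto_const_nhds.congr' (hc.mono fun _ h => h.symm))

theorem Real.eq_of_forall_le_of_forall_ge_off_countable {C : Set ℝ} (hC : C.Countable)
    {a b t x : ℝ} (ht : t ∈ Icc a b) (hx : x ∈ Icc a b)
    (hle : ∀ u ∈ Icc a b, u ∉ C → u < t → u ≤ x)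
    (hge : ∀ u ∈ Icc a b, u ∉ C → t < u → x ≤ u) : x = t := by
  have hdense : Dense Cᶜ := hC.dense_compl ℝ
  rcases lt_trichotomy x t with hxt | hxt | htx
  · obtain ⟨u, huC, hxu, hut⟩ := hdense.exists_mem_open isOpen_Ioo (nonempty_Ioo.2 hxt)
    exact absurd (hle u ⟨hx.1.trans hxu.le, hut.le.trans ht.2⟩ huC hut) (not_le.2 hxu)
  · exact hxt
  · obtain ⟨u, huC, htu, hux⟩ := hdense.exists_mem_open isOpen_Ioo (nonempty_Ioo.2 htx)
    exact absurd (hge u ⟨ht.1.trans htu.le, hux.le.trans hx.2⟩ huC htu) (not_le.2 hux)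

theorem stmt_6_general (a b L : ℝ)
    (σ : ℝ → ℝ) (hσmap : MapsTo σ (Icc a b) (Icc 0 1))
    (hσmono : StrictMonoOn σ (Icc a b))
    (σk : ℕ → ℝ → ℝ) (φ0k : ℕ → ℝ → ℝ)
    (hσkmono : ∀ k, StrictMonoOn (σk k) (Icc a b))
    (hσksurj : ∀ k, (σk k) '' (Icc a b) = Icc 0 1)
    (hinv₁ : ∀ k, ∀ t ∈ Icc a b, φ0k k (σk k t) = t)
    (hinv₂ : ∀ k, ∀ s ∈ Icc (0:ℝ) 1, σk k (φ0k k s) = s)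
    (hconv : ∀ t ∈ Icc a b, ContinuousWithinAt σ (Icc a b) t →
      Tendsto (fun k => σk k t) atTop (nhds (σ t)))
    (φ₀ : ℝ → ℝ) (hφ₀lip : LipschitzOnWith (Real.toNNReal L) φ₀ (Icc 0 1))
    (hunif : TendstoUniformlyOn φ0k φ₀ atTop (Icc 0 1)) :
    ∀ t ∈ Icc a b, φ₀ (σ t) = t := by
  have hσkmap k : MapsTo (σk k) (Icc a b) (Icc 0 1) := mapsTo_iff_image_subset.2 (hσksurj k).subset
  have hφ0kmap k : MapsTo (φ0k k) (Icc 0 1) (Icc a b) :=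
    LeftInvOn.mapsTo (hinv₁ k) (hσksurj k).symm.subset
  have hpt : ∀ s ∈ Icc (0:ℝ) 1, Tendsto (φ0k · s) atTop (𝓝 (φ₀ s)) :=
    fun s hs => hunif.tendsto_at hs
  have hφ₀mono : MonotoneOn φ₀ (Icc 0 1) :=
    monotoneOn_of_frequently_monotoneOn_of_tendsto (Frequently.of_forall fun k =>
      Function.monotoneOn_of_rightInvOn_of_mapsTo (hσkmono k).monotoneOn (hinv₂ k) (hφ0kmap k)) hpt
  have hφ₀map : MapsTo φ₀ (Icc 0 1) (Icc a b) := fun s hs =>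
    isClosed_Icc.mem_of_tendsto (hpt s hs) (Eventually.of_forall fun k => hφ0kmap k hs)
  have hfix : ∀ u ∈ Icc a b, u ∉ {x ∈ Icc a b | ¬ContinuousWithinAt σ (Icc a b) x} →
      φ₀ (σ u) = u := fun u hu huC =>
    have hcu : ContinuousWithinAt σ (Icc a b) u := not_not.1 fun h => huC ⟨hu, h⟩
    hunif.apply_eq_of_eventually_apply_eq (hφ₀lip.continuousOn.continuousWithinAt (hσmap hu))
      (tendsto_nhdsWithin_of_tendsto_nhds_of_eventually_within _ (hconv u hu hcu)
        (Eventually.of_forall fun k => hσkmap k hu))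
      (Eventually.of_forall fun k => hinv₁ k u hu)
  intro t ht
  refine Real.eq_of_forall_le_of_forall_ge_off_countable
    hσmono.monotoneOn.countable_not_continuousWithinAt ht (hφ₀map (hσmap ht)) ?_ ?_
  · intro u hu huC hut
    calc u = φ₀ (σ u) := (hfix u hu huC).symm
      _ ≤ φ₀ (σ t) := hφ₀mono (hσmap hu) (hσmap ht) (hσmono.monotoneOn hu ht hut.le)
  · intro u hu huC htu
    calc φ₀ (σ t) ≤ φ₀ (σ u) := hφ₀mono (hσmap ht) (hσmap hu) (hσmono.monotoneOn ht hu htu.le)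
      _ = u := hfix u hu huC

/-- If strictly increasing continuous surjections `σ_k : [a,b] → [0,1]` with
equi-`L`-Lipschitz inverses `φ_{0,k}` converge to a strictly increasing `σ` at
every continuity point of `σ`, and the `φ_{0,k}` converge uniformly to an
`L`-Lipschitz `φ₀`, then `φ₀(σ(t)) = t` for every `t ∈ [a,b]`. -/
theorem stmt_6 (a b L : ℝ) (hab : a < b) (hL : 0 < L)
    (σ : ℝ → ℝ) (hσmap : MapsTo σ (Icc a b) (Icc 0 1))
    (hσmono : StrictMonoOn σ (Icc a b))
    (σk : ℕ → ℝ → ℝ) (φ0k : ℕ → ℝ → ℝ)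
    (hσkmono : ∀ k, StrictMonoOn (σk k) (Icc a b))
    (hσkcont : ∀ k, ContinuousOn (σk k) (Icc a b))
    (hσksurj : ∀ k, (σk k) '' (Icc a b) = Icc 0 1)
    (hinv₁ : ∀ k, ∀ t ∈ Icc a b, φ0k k (σk k t) = t)
    (hinv₂ : ∀ k, ∀ s ∈ Icc (0:ℝ) 1, σk k (φ0k k s) = s)
    (hφ0klip : ∀ k, LipschitzOnWith (Real.toNNReal L) (φ0k k) (Icc 0 1))
    (hconv : ∀ t ∈ Icc a b, ContinuousWithinAt σ (Icc a b) t →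
      Tendsto (fun k => σk k t) atTop (nhds (σ t)))
    (φ₀ : ℝ → ℝ) (hφ₀lip : LipschitzOnWith (Real.toNNReal L) φ₀ (Icc 0 1))
    (hunif : TendstoUniformlyOn φ0k φ₀ atTop (Icc 0 1)) :
    ∀ t ∈ Icc a b, φ₀ (σ t) = t :=
  stmt_6_general a b L σ hσmap hσmono σk φ0k hσkmono hσksurj hinv₁ hinv₂ hconv φ₀ hφ₀lip hunif
end

section
/- The set S = {(x, y) ∈ ℝ² : x ∈ (0,1], y = x·sin(1/x)} ∪ {(0,0)} is a compact, arcwise connected subset of ℝ² that does not have the Whitney property: for every M ≥ 1 there exist points u₁, u₂ ∈ S such that every absolutely continuous path γ : [0,1] → S from u₁ to u₂ has total variation greater than M·|u₁ − u₂|. -/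
/-!
`S` is the image of `[0, 1]` under the continuous map `x ↦ (x, x sin (1/x))`, hence compact and
path connected. Take `u₁ = (0, 0)` and `u₂ = (1, sin 1)`. A continuous path `γ` in `S` from `u₁` to
`u₂` is `x ↦ (x, x sin (1/x))` composed with its first coordinate, and choosing first hitting
times of that coordinate shows that `γ` has at least the variation of `x sin (1/x)` on `[0, 1]`.
That variation is infinite: between the consecutive peaks `1 / (π/2 + jπ)` the function moves by
more than `1 / (π/2 + jπ)`, and these numbers are a shifted harmonic series.
-/

open Set MeasureTheory intervalIntegral Real Filter Topology

section HittingTimes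

variable {α δ : Type*} [ConditionallyCompleteLinearOrder α] [TopologicalSpace α] [OrderTopology α]
  [DenselyOrdered α] [LinearOrder δ] [TopologicalSpace δ] [OrderClosedTopology δ]

theorem ContinuousOn.exists_monotoneOn_rightInvOn {p : α → δ} {a b : α} (hab : a ≤ b)
    (hp : ContinuousOn p (Icc a b)) :
    ∃ T : δ → α, MonotoneOn T (Icc (p a) (p b)) ∧ MapsTo T (Icc (p a) (p b)) (Icc a b) ∧
      RightInvOn T p (Icc (p a) (p b)) := by
  set A : δ → Set α := fun x => {t | t ∈ Icc a b ∧ x ≤ p t}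
  have hA_closed (x : δ) : IsClosed (A x) :=
    hp.preimage_isClosed_of_isClosed isClosed_Icc isClosed_Ici
  have hA_bdd (x : δ) : BddBelow (A x) := ⟨a, fun t ht => ht.1.1⟩
  have hA_ne {x : δ} (hx : x ∈ Icc (p a) (p b)) : (A x).Nonempty := ⟨b, ⟨⟨hab, le_rfl⟩, hx.2⟩⟩
  have hT_mem {x : δ} (hx : x ∈ Icc (p a) (p b)) : sInf (A x) ∈ A x :=
    (hA_closed x).csInf_mem (hA_ne hx) (hA_bdd x)
  refine ⟨fun x => sInf (A x), fun x hx y hy hxy => ?_, fun x hx => (hT_mem hx).1, fun x hx => ?_⟩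
  · exact csInf_le_csInf (hA_bdd x) (hA_ne hy) fun t ht => ⟨ht.1, hxy.trans ht.2⟩
  · obtain ⟨⟨haT, hTb⟩, hxT⟩ := hT_mem hx
    obtain ⟨s, hs, rfl⟩ := intermediate_value_Icc haT (hp.mono (Icc_subset_Icc le_rfl hTb))
      ⟨hx.1, hxT⟩
    have : sInf (A (p s)) ≤ s := csInf_le (hA_bdd _) ⟨⟨hs.1, hs.2.trans hTb⟩, le_rfl⟩
    exact congrArg p (le_antisymm this hs.2)

theorem eVariationOn_le_comp_of_continuousOn {E : Type*} [PseudoEMetricSpace E] (f : δ → E)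
    {p : α → δ} {a b : α} (hab : a ≤ b) (hp : ContinuousOn p (Icc a b)) :
    eVariationOn f (Icc (p a) (p b)) ≤ eVariationOn (f ∘ p) (Icc a b) := by
  obtain ⟨T, hT_mono, hT_maps, hT_inv⟩ := hp.exists_monotoneOn_rightInvOn hab
  calc eVariationOn f (Icc (p a) (p b))
      = eVariationOn ((f ∘ p) ∘ T) (Icc (p a) (p b)) :=
        eVariationOn.eq_of_eqOn fun x hx => by simp [hT_inv hx]
    _ ≤ eVariationOn (f ∘ p) (Icc a b) := eVariationOn.comp_le_of_monotoneOn _ T hT_mono hT_maps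

end HittingTimes

theorem eVariationOn.sum_le_of_antitone {α E : Type*} [LinearOrder α] [PseudoEMetricSpace E]
    {f : α → E} {s : Set α} {n : ℕ} {u : ℕ → α} (hu : Antitone u) (us : ∀ i, u i ∈ s) :
    ∑ i ∈ Finset.range n, edist (f (u (i + 1))) (f (u i)) ≤ eVariationOn f s := by
  rw [← eVariationOn.comp_ofDual]
  exact eVariationOn.sum_le (f := f ∘ OrderDual.ofDual) (u := OrderDual.toDual ∘ u) hu us

theorem continuous_mul_sin_one_div : Continuous fun x : ℝ => x * sin (1 / x) := by
  refine continuous_iff_continuousAt.2 fun x => ?_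
  rcases eq_or_ne x 0 with rfl | hx
  · have hsqueeze : Tendsto (fun x : ℝ => x * sin (1 / x)) (𝓝 0) (𝓝 0) :=
      squeeze_zero_norm (a := fun t => |t|)
        (fun t => by simpa using mul_le_of_le_one_right (abs_nonneg t) (abs_sin_le_one (1 / t)))
        (continuous_abs.tendsto' 0 0 abs_zero)
    simpa [ContinuousAt] using hsqueeze
  · exact continuousAt_id.mul
      (continuous_sin.continuousAt.comp (continuousAt_const.div continuousAt_id hx))

noncomputable def sinInvPeak (j : ℕ) : ℝ := (π / 2 + j * π)⁻¹

theorem sinInvPeak_eq (j : ℕ) : sinInvPeak j = π⁻¹ * (1 / |(j : ℝ) + 1 / 2| ^ (1 : ℝ)) := by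
  rw [sinInvPeak, rpow_one, abs_of_pos (by positivity), one_div, ← mul_inv]
  ring_nf

theorem sinInvPeak_pos (j : ℕ) : 0 < sinInvPeak j := by
  rw [sinInvPeak_eq]; positivity

theorem sinInvPeak_antitone : Antitone sinInvPeak := fun i j hij =>
  inv_anti₀ (by positivity) (by gcongr)

theorem sinInvPeak_mem_Icc (j : ℕ) : sinInvPeak j ∈ Icc (0 : ℝ) 1 :=
  ⟨(sinInvPeak_pos j).le,
    inv_le_one_of_one_le₀ (by nlinarith [pi_gt_three, (Nat.cast_nonneg j : (0 : ℝ) ≤ j)])⟩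

theorem not_summable_sinInvPeak : ¬ Summable sinInvPeak := fun h => by
  simpa [sinInvPeak_eq, pi_ne_zero] using (Real.summable_one_div_nat_add_rpow (1 / 2) 1).1
    ((summable_mul_left_iff (inv_ne_zero pi_ne_zero)).1 (funext sinInvPeak_eq ▸ h))

theorem sin_one_div_sinInvPeak (j : ℕ) : sin (1 / sinInvPeak j) = (-1) ^ j := by
  rw [sinInvPeak, one_div, inv_inv, sin_add_nat_mul_pi, sin_pi_div_two, mul_one]

theorem ofReal_sinInvPeak_le_edist (j : ℕ) :
    ENNReal.ofReal (sinInvPeak j) ≤ edist (sinInvPeak (j + 1) * sin (1 / sinInvPeak (j + 1)))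
      (sinInvPeak j * sin (1 / sinInvPeak j)) := by
  have hdiff : sinInvPeak (j + 1) * sin (1 / sinInvPeak (j + 1)) -
      sinInvPeak j * sin (1 / sinInvPeak j) = (-1) ^ j * -(sinInvPeak (j + 1) + sinInvPeak j) := by
    rw [sin_one_div_sinInvPeak, sin_one_div_sinInvPeak]; ring
  rw [edist_dist, dist_eq, hdiff, abs_mul, abs_neg_one_pow, one_mul, abs_neg,
    abs_of_pos (add_pos (sinInvPeak_pos _) (sinInvPeak_pos _))]
  exact ENNReal.ofReal_le_ofReal (le_add_of_nonneg_left (sinInvPeak_pos _).le)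

theorem eVariationOn_mul_sin_one_div_eq_top :
    eVariationOn (fun x : ℝ => x * sin (1 / x)) (Icc 0 1) = ⊤ := by
  have hpartial (n : ℕ) :
      ∑ j ∈ Finset.range n, ENNReal.ofReal (sinInvPeak j) ≤
        eVariationOn (fun x : ℝ => x * sin (1 / x)) (Icc 0 1) :=
    (Finset.sum_le_sum fun j _ => ofReal_sinInvPeak_le_edist j).trans
      (eVariationOn.sum_le_of_antitone sinInvPeak_antitone sinInvPeak_mem_Icc)
  refine top_le_iff.1 ((top_le_iff.2 ?_).trans (ENNReal.tsum_le_of_sum_range_le hpartial))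
  by_contra h
  exact not_summable_sinInvPeak (by
    simpa [ENNReal.toReal_ofReal (sinInvPeak_pos _).le] using ENNReal.summable_toReal h)

theorem graph_mul_sin_one_div_eq_image :
    {p : ℝ × ℝ | p.1 ∈ Ioc (0:ℝ) 1 ∧ p.2 = p.1 * sin (1 / p.1)} ∪ {(0, 0)} =
      (fun x : ℝ => (x, x * sin (1 / x))) '' Icc 0 1 := by
  ext ⟨x, y⟩
  simp only [mem_union, mem_ofPred_eq, mem_singleton_iff, mem_image, Prod.mk.injEq]
  constructor
  · rintro (⟨hx, rfl⟩ | ⟨rfl, rfl⟩)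
    · exact ⟨x, Ioc_subset_Icc_self hx, rfl, rfl⟩
    · exact ⟨0, left_mem_Icc.2 zero_le_one, rfl, by simp⟩
  · rintro ⟨x, hx, rfl, rfl⟩
    rcases hx.1.eq_or_lt with rfl | hx₀
    · simp
    · exact Or.inl ⟨⟨hx₀, hx.2⟩, rfl⟩

/-- The set `S = {(x, x·sin(1/x)) : x ∈ (0,1]} ∪ {(0,0)}` is compact and
arcwise connected but does not have the Whitney property: for every `M ≥ 1`
there are points `u₁, u₂ ∈ S` such that every absolutely continuous path in `S`
joining them has total variation exceeding `M·|u₁ - u₂|`. -/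
theorem stmt_8 :
    let S : Set (ℝ × ℝ) :=
      {p | p.1 ∈ Ioc (0:ℝ) 1 ∧ p.2 = p.1 * Real.sin (1 / p.1)} ∪ {(0, 0)}
    IsCompact S ∧ IsPathConnected S ∧
      ∀ M : ℝ, 1 ≤ M → ∃ u₁ ∈ S, ∃ u₂ ∈ S,
        ∀ γ : ℝ → ℝ × ℝ,
          γ 0 = u₁ → γ 1 = u₂ → MapsTo γ (Icc 0 1) S →
          (∃ g : ℝ → ℝ × ℝ, IntegrableOn g (Icc 0 1) ∧
            ∀ t ∈ Icc (0:ℝ) 1, γ t = γ 0 + ∫ s in (0:ℝ)..t, g s) →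
          eVariationOn γ (Icc 0 1) > ENNReal.ofReal (M * ‖u₁ - u₂‖) := by
  intro S
  set F : ℝ → ℝ × ℝ := fun x => (x, x * sin (1 / x))
  have hS : S = F '' Icc 0 1 := graph_mul_sin_one_div_eq_image
  have hF : Continuous F := continuous_id.prodMk continuous_mul_sin_one_div
  rw [hS]
  refine ⟨isCompact_Icc.image hF,
    ((convex_Icc 0 1).isPathConnected (nonempty_Icc.2 zero_le_one)).image hF, fun M _ => ?_⟩
  refine ⟨F 0, mem_image_of_mem F (left_mem_Icc.2 zero_le_one), F 1,
    mem_image_of_mem F (right_mem_Icc.2 zero_le_one), fun γ hγ0 hγ1 hγS ⟨g, hg, hγ⟩ => ?_⟩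
  have hγ_cont : ContinuousOn γ (Icc 0 1) := by
    have := continuousOn_primitive_interval (μ := volume) (a := 0) (b := 1) (f := g)
    rw [uIcc_of_le zero_le_one] at this
    exact (continuousOn_const.add (this hg)).congr hγ
  have hγ_eq : EqOn γ (F ∘ fun t => (γ t).1) (Icc 0 1) := fun t ht => by
    obtain ⟨x, -, hx⟩ := hγS ht
    simp [← hx, F]
  have hF_top : eVariationOn F (Icc 0 1) = ⊤ := by
    have h :=
      LipschitzWith.prod_snd.lipschitzOnWith.comp_eVariationOn_le (mapsTo_univ F (Icc 0 1))
    rwa [ENNReal.coe_one, one_mul, show Prod.snd ∘ F = fun x => x * sin (1 / x) from rfl,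
      eVariationOn_mul_sin_one_div_eq_top, top_le_iff] at h
  calc ENNReal.ofReal (M * ‖F 0 - F 1‖) < ⊤ := ENNReal.ofReal_lt_top
    _ = eVariationOn F (Icc ((γ 0).1) ((γ 1).1)) := by rw [hγ0, hγ1]; exact hF_top.symm
    _ ≤ eVariationOn (F ∘ fun t => (γ t).1) (Icc 0 1) :=
      eVariationOn_le_comp_of_continuousOn F zero_le_one
        (continuous_fst.comp_continuousOn hγ_cont)
    _ = eVariationOn γ (Icc 0 1) := (eVariationOn.eq_of_eqOn hγ_eq).symm
end

section
/- Let U ⊂ ℝ^m be a compact set with the Whitney property. Then every function u : [a,b] → U of bounded variation is the pointwise (everywhere) limit of a sequence (u_k) of absolutely continuous functions u_k : [a,b] → U with equibounded total variation, i.e. sup_k Var_{[a,b]}(u_k) < ∞. -/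
open Set Filter MeasureTheory intervalIntegral Topology

/-!
Let `v t` be the variation of `u` on `[a, t]`. Choose finite sets `P k ⊆ [a, b]` containing `a`, `b`
that exhaust a countable set containing the rationals of `[a, b]` and the discontinuity points
of `v`. The function `u k` agrees with `u` on `P k` and, on each gap `[p, q]` of `P k`, runs along
the Whitney path from `u p` to `u q`, reparametrised affinely. It is absolutely continuous, takes
values in `U`, and its variation is at most `M` times that of `u`. A point of the countable set
lies in `P k` for large `k`, where `u k = u`; at any other `t` the gap `[p, q]` of `P k` around `t`
shrinks to `t`, and `‖u k t - u t‖ ≤ (M + 1) (v q - v p) → 0` because `v` is continuous at `t`.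
-/

theorem sub_div_sub_mem_Icc_zero_one {p q t : ℝ} (hpq : p < q) (ht : t ∈ Icc p q) :
    (t - p) / (q - p) ∈ Icc (0 : ℝ) 1 :=
  ⟨div_nonneg (sub_nonneg.2 ht.1) (sub_nonneg.2 hpq.le),
    div_le_one_of_le₀ (sub_le_sub_right ht.2 p) (sub_nonneg.2 hpq.le)⟩

theorem eVariationOn_Icc_add_Icc {α E : Type*} [LinearOrder α] [PseudoEMetricSpace E] (f : α → E)
    {a b c : α} (hab : a ≤ b) (hbc : b ≤ c) :
    eVariationOn f (Icc a b) + eVariationOn f (Icc b c) = eVariationOn f (Icc a c) := by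
  simpa using eVariationOn.Icc_add_Icc f (s := univ) hab hbc (mem_univ b)

section IndefiniteIntegral

variable {E : Type*} [NormedAddCommGroup E] [NormedSpace ℝ E]

def IsIndefiniteIntegralOn (f : ℝ → E) (a b : ℝ) : Prop :=
  ∃ g : ℝ → E, IntegrableOn g (Icc a b) ∧ ∀ t ∈ Icc a b, f t = f a + ∫ s in a..t, g s

namespace IsIndefiniteIntegralOn

variable {f f' : ℝ → E} {a b c : ℝ}

theorem refl (f : ℝ → E) (a : ℝ) : IsIndefiniteIntegralOn f a a :=
  ⟨0, integrableOn_zero, fun t ht => by rw [le_antisymm ht.2 ht.1]; simp⟩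

theorem congr (h : IsIndefiniteIntegralOn f a b) (hff' : EqOn f f' (Icc a b)) :
    IsIndefiniteIntegralOn f' a b := by
  obtain ⟨g, hg, hf⟩ := h
  refine ⟨g, hg, fun t ht => ?_⟩
  rw [← hff' ht, ← hff' (left_mem_Icc.2 (ht.1.trans ht.2)), hf t ht]

theorem trans (h₁ : IsIndefiniteIntegralOn f a b) (h₂ : IsIndefiniteIntegralOn f b c)
    (hab : a ≤ b) (hbc : b ≤ c) : IsIndefiniteIntegralOn f a c := by
  classical
  obtain ⟨g₁, hg₁, hf₁⟩ := h₁
  obtain ⟨g₂, hg₂, hf₂⟩ := h₂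
  set g := (Iic b).piecewise g₁ g₂
  have heq₁ : EqOn g g₁ (Icc a b) := fun x hx => piecewise_eq_of_mem _ _ _ hx.2
  have heq₂ : EqOn g g₂ (Ioc b c) := fun x hx => piecewise_eq_of_notMem _ _ _ (not_le.2 hx.1)
  have hi₁ : IntegrableOn g (Icc a b) := hg₁.congr_fun heq₁.symm measurableSet_Icc
  have hi₂ : IntegrableOn g (Ioc b c) :=
    (hg₂.mono_set Ioc_subset_Icc_self).congr_fun heq₂.symm measurableSet_Ioc
  refine ⟨g, Icc_union_Ioc_eq_Icc hab hbc ▸ hi₁.union hi₂, fun t ht => ?_⟩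
  rcases le_total t b with htb | hbt
  · rw [hf₁ t ⟨ht.1, htb⟩, integral_congr (heq₁.mono ?_)]
    rw [uIcc_of_le ht.1]; exact Icc_subset_Icc_right htb
  · have hbt' : IntervalIntegrable g volume b t :=
      (intervalIntegrable_iff_integrableOn_Ioc_of_le hbt).2
        (hi₂.mono_set (Ioc_subset_Ioc_right ht.2))
    rw [hf₂ t ⟨hbt, ht.2⟩, hf₁ b ⟨hab, le_rfl⟩, ← integral_add_adjacent_intervals
      ((intervalIntegrable_iff_integrableOn_Icc_of_le hab).2 hi₁) hbt', add_assoc,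
      integral_congr (heq₁.mono (uIcc_of_le hab).subset)]
    congr 2
    refine integral_congr_ae (Eventually.of_forall fun x hx => ?_)
    rw [uIoc_of_le hbt] at hx
    exact (heq₂ ⟨hx.1, hx.2.trans ht.2⟩).symm

theorem comp_sub_div_sub (h : IsIndefiniteIntegralOn f 0 1) {p q : ℝ} (hpq : p < q) :
    IsIndefiniteIntegralOn (f ∘ fun τ => (τ - p) / (q - p)) p q := by
  obtain ⟨g, hg, hf⟩ := h
  have hqp : q - p ≠ 0 := sub_ne_zero.2 hpq.ne'
  refine ⟨fun τ => (q - p)⁻¹ • g ((τ - p) / (q - p)), ?_, fun t ht => ?_⟩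
  · have := (((intervalIntegrable_iff_integrableOn_Icc_of_le zero_le_one).2 hg).comp_mul_left
      (c := (q - p)⁻¹)).comp_sub_right p
    simp only [div_inv_eq_mul, zero_mul, zero_add, one_mul, sub_add_cancel] at this
    rw [← intervalIntegrable_iff_integrableOn_Icc_of_le hpq.le]
    simp only [div_eq_inv_mul]
    exact this.smul (q - p)⁻¹
  · rw [Function.comp_apply, Function.comp_apply, sub_self, zero_div,
      hf _ (sub_div_sub_mem_Icc_zero_one hpq ht), intervalIntegral.integral_smul,
      integral_comp_sub_right (fun τ => g (τ / (q - p))), integral_comp_div _ hqp, sub_self,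
      zero_div, smul_smul, inv_mul_cancel₀ hqp, one_smul]

end IsIndefiniteIntegralOn

end IndefiniteIntegral

section Consecutive

variable {α : Type*} [ConditionallyCompleteLinearOrder α]

structure Finset.IsConsecutive (P : Finset α) (p q : α) : Prop where
  left_mem : p ∈ P
  right_mem : q ∈ P
  lt : p < q
  notMem_Ioo : ∀ x ∈ P, x ∉ Set.Ioo p q

theorem Finset.rel_of_isConsecutive {P : Finset α} {R : α → α → Prop} (hrefl : ∀ x, R x x)
    (htrans : ∀ x y z, x ≤ y → y ≤ z → R x y → R y z → R x z)
    (hcell : ∀ p q, P.IsConsecutive p q → R p q) {a c : α} (ha : a ∈ P) (hc : c ∈ P)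
    (hac : a ≤ c) : R a c := by
  classical
  by_contra hRc
  -- a least counterexample `c₀` and its predecessor in `P` would be consecutive
  obtain ⟨c₀, hc₀, hmin⟩ :=
    (P.filter fun x => a ≤ x ∧ ¬R a x).exists_min_image id ⟨c, by simp [*]⟩
  simp only [Finset.mem_filter, id] at hc₀ hmin
  obtain ⟨hc₀P, hac₀, hRc₀⟩ := hc₀
  have hac₀' : a < c₀ := hac₀.lt_of_ne fun h => hRc₀ (h ▸ hrefl a)
  obtain ⟨p, hp, hmax⟩ := (P.filter (· < c₀)).exists_max_image id ⟨a, by simp [*]⟩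
  simp only [Finset.mem_filter, id] at hp hmax
  obtain ⟨hpP, hpc₀⟩ := hp
  have hap : a ≤ p := hmax a ⟨ha, hac₀'⟩
  have hRap : R a p := by
    by_contra h
    exact (hmin p ⟨hpP, hap, h⟩).not_gt hpc₀
  refine hRc₀ (htrans a p c₀ hap hpc₀.le hRap (hcell p c₀ ⟨hpP, hc₀P, hpc₀, fun x hx hxI => ?_⟩))
  exact (hmax x ⟨hx, hxI.2⟩).not_gt hxI.1

/-- When no element of `P` lies below (resp. above) `t`, this is the junk value `sSup ∅ = 0`. -/
noncomputable def Finset.lowerNeighbor (P : Finset α) (t : α) : α := sSup (↑P ∩ Set.Iio t)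

noncomputable def Finset.upperNeighbor (P : Finset α) (t : α) : α := sInf (↑P ∩ Set.Ioi t)

namespace Finset

variable {P : Finset α} {p q t x : α}

theorem lowerNeighbor_mem (hx : x ∈ P) (hxt : x < t) : P.lowerNeighbor t ∈ ↑P ∩ Set.Iio t :=
  Set.Nonempty.csSup_mem ⟨x, hx, hxt⟩ (P.finite_toSet.inter_of_left _)

theorem le_lowerNeighbor (hx : x ∈ P) (hxt : x < t) : x ≤ P.lowerNeighbor t :=
  le_csSup (P.finite_toSet.inter_of_left _).bddAbove ⟨hx, hxt⟩

theorem upperNeighbor_mem (hx : x ∈ P) (htx : t < x) : P.upperNeighbor t ∈ ↑P ∩ Set.Ioi t :=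
  Set.Nonempty.csInf_mem ⟨x, hx, htx⟩ (P.finite_toSet.inter_of_left _)

theorem upperNeighbor_le (hx : x ∈ P) (htx : t < x) : P.upperNeighbor t ≤ x :=
  csInf_le (P.finite_toSet.inter_of_left _).bddBelow ⟨hx, htx⟩

theorem isConsecutive_neighbors (ht : t ∉ P) (hp : p ∈ P) (hpt : p ≤ t) (hq : q ∈ P)
    (htq : t ≤ q) : P.IsConsecutive (P.lowerNeighbor t) (P.upperNeighbor t) ∧
      t ∈ Set.Ioo (P.lowerNeighbor t) (P.upperNeighbor t) := by
  obtain ⟨hlP, hlt⟩ := lowerNeighbor_mem hp (hpt.lt_of_ne (ne_of_mem_of_not_mem hp ht))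
  obtain ⟨huP, hut⟩ := upperNeighbor_mem hq (htq.lt_of_ne (ne_of_mem_of_not_mem hq ht).symm)
  refine ⟨⟨hlP, huP, lt_trans hlt hut, fun x hx hxI => ?_⟩, hlt, hut⟩
  rcases lt_or_gt_of_ne (ne_of_mem_of_not_mem hx ht) with hxt | htx
  · exact (le_lowerNeighbor hx hxt).not_gt hxI.1
  · exact (upperNeighbor_le hx htx).not_gt hxI.2

namespace IsConsecutive

theorem notMem (h : P.IsConsecutive p q) (ht : t ∈ Set.Ioo p q) : t ∉ P :=
  fun htP => h.notMem_Ioo t htP ht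

theorem lowerNeighbor_eq (h : P.IsConsecutive p q) (ht : t ∈ Set.Ioo p q) :
    P.lowerNeighbor t = p :=
  IsGreatest.csSup_eq ⟨⟨h.left_mem, ht.1⟩, fun x hx =>
    not_lt.1 fun hpx => h.notMem_Ioo x hx.1 ⟨hpx, hx.2.trans ht.2⟩⟩

theorem upperNeighbor_eq (h : P.IsConsecutive p q) (ht : t ∈ Set.Ioo p q) :
    P.upperNeighbor t = q :=
  IsLeast.csInf_eq ⟨⟨h.right_mem, ht.2⟩, fun x hx =>
    not_lt.1 fun hxq => h.notMem_Ioo x hx.1 ⟨ht.1.trans hx.2, hxq⟩⟩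

end IsConsecutive

variable [TopologicalSpace α] [OrderTopology α] {ι : Type*} {l : Filter ι} {P : ι → Finset α}

theorem tendsto_lowerNeighbor [NoMinOrder α] (h : ∀ r < t, ∀ᶠ i in l, ∃ x ∈ P i, r < x ∧ x < t) :
    Tendsto (fun i => (P i).lowerNeighbor t) l (𝓝 t) := by
  obtain ⟨r₀, hr₀⟩ := exists_lt t
  refine tendsto_order.2 ⟨fun r hr => (h r hr).mono fun i ⟨x, hx, hrx, hxt⟩ =>
    hrx.trans_le (le_lowerNeighbor hx hxt), fun r hr => (h r₀ hr₀).mono fun i ⟨x, hx, _, hxt⟩ =>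
    (lowerNeighbor_mem hx hxt).2.trans hr⟩

theorem tendsto_upperNeighbor [NoMaxOrder α] (h : ∀ r > t, ∀ᶠ i in l, ∃ x ∈ P i, t < x ∧ x < r) :
    Tendsto (fun i => (P i).upperNeighbor t) l (𝓝 t) := by
  obtain ⟨r₀, hr₀⟩ := exists_gt t
  refine tendsto_order.2 ⟨fun r hr => (h r₀ hr₀).mono fun i ⟨x, hx, htx, _⟩ =>
    hr.trans (upperNeighbor_mem hx htx).2, fun r hr => (h r hr).mono fun i ⟨x, hx, htx, hxr⟩ =>
    (upperNeighbor_le hx htx).trans_lt hxr⟩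

end Finset

end Consecutive

theorem Set.Countable.exists_eventually_mem_finset {α : Type*} {S : Set α} (hS : S.Countable) :
    ∃ Q : ℕ → Finset α, (∀ k, ↑(Q k) ⊆ S) ∧ ∀ x ∈ S, ∀ᶠ k in atTop, x ∈ Q k := by
  classical
  rcases S.eq_empty_or_nonempty with rfl | hne
  · exact ⟨fun _ => ∅, by simp, by simp⟩
  obtain ⟨e, rfl⟩ := hS.exists_eq_range hne
  refine ⟨fun k => (Finset.range k).image e, fun k => by simp, ?_⟩
  rintro _ ⟨n, rfl⟩
  exact (eventually_gt_atTop n).mono fun k hk => Finset.mem_image_of_mem e (Finset.mem_range.2 hk)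

theorem exists_finset_seq_tendsto_neighbors {a b : ℝ} (hab : a ≤ b) {B : Set ℝ} (hB : B.Countable) :
    ∃ P : ℕ → Finset ℝ, (∀ k, a ∈ P k ∧ b ∈ P k ∧ ↑(P k) ⊆ Icc a b) ∧
      ∀ t ∈ Icc a b, (∀ᶠ k in atTop, t ∈ P k) ∨
        (t ∉ B ∧ (∀ k, t ∉ P k) ∧ Tendsto (fun k => (P k).lowerNeighbor t) atTop (𝓝 t) ∧
          Tendsto (fun k => (P k).upperNeighbor t) atTop (𝓝 t)) := by
  classical
  set D := (B ∪ range ((↑) : ℚ → ℝ)) ∩ Icc a b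
  obtain ⟨Q, hQD, hQ⟩ := ((hB.union (countable_range _)).mono inter_subset_left :
    D.Countable).exists_eventually_mem_finset
  set P : ℕ → Finset ℝ := fun k => insert a (insert b (Q k)) with hP
  have hdense : ∀ r s, a ≤ r → r < s → s ≤ b → ∀ᶠ k in atTop, ∃ x ∈ P k, r < x ∧ x < s := by
    intro r s har hrs hsb
    obtain ⟨x, hrx, hxs⟩ := exists_rat_btwn hrs
    exact (hQ x ⟨Or.inr ⟨x, rfl⟩, har.trans hrx.le, hxs.le.trans hsb⟩).mono fun k hk =>
      ⟨x, by simp [hP, hk], hrx, hxs⟩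
  refine ⟨P, fun k => ⟨by simp [hP], by simp [hP], ?_⟩, fun t ht => ?_⟩
  · simp only [hP, Finset.coe_insert]
    exact insert_subset (left_mem_Icc.2 hab) (insert_subset (right_mem_Icc.2 hab)
      ((hQD k).trans inter_subset_right))
  by_cases htD : t = a ∨ t = b ∨ t ∈ D
  · left
    rcases htD with rfl | rfl | htD
    · simp [hP]
    · simp [hP]
    · exact (hQ t htD).mono fun k hk => by simp [hP, hk]
  right
  push Not at htD
  obtain ⟨hta, htb, htD⟩ := htD
  have hat : a < t := ht.1.lt_of_ne (Ne.symm hta)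
  have htb : t < b := ht.2.lt_of_ne htb
  refine ⟨fun htB => htD ⟨Or.inl htB, ht⟩, fun k => ?_, ?_, ?_⟩
  · simp only [hP, Finset.mem_insert, hat.ne', htb.ne, false_or]
    exact fun h => htD (hQD k h)
  · exact Finset.tendsto_lowerNeighbor fun r hr =>
      (hdense _ t (le_max_right r a) (max_lt hr hat) ht.2).mono fun k ⟨x, hx, hrx, hxt⟩ =>
        ⟨x, hx, (le_max_left r a).trans_lt hrx, hxt⟩
  · exact Finset.tendsto_upperNeighbor fun r hr =>
      (hdense t _ ht.1 (lt_min hr htb) (min_le_right r b)).mono fun k ⟨x, hx, htx, hxr⟩ =>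
        ⟨x, hx, htx, hxr.trans_le (min_le_left r b)⟩

section Interpolation

variable {E : Type*}

noncomputable def interpolate (P : Finset ℝ) (u : ℝ → E) (γ : E → E → ℝ → E) (t : ℝ) : E :=
  if t ∈ P then u t else
    γ (u (P.lowerNeighbor t)) (u (P.upperNeighbor t))
      ((t - P.lowerNeighbor t) / (P.upperNeighbor t - P.lowerNeighbor t))

theorem interpolate_of_mem {P : Finset ℝ} {u : ℝ → E} {γ : E → E → ℝ → E} {t : ℝ} (ht : t ∈ P) :
    interpolate P u γ t = u t :=
  if_pos ht

variable [NormedAddCommGroup E] [NormedSpace ℝ E]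

structure IsWhitneyPath (U : Set E) (M : ℝ) (x y : E) (γ : ℝ → E) : Prop where
  map_zero : γ 0 = x
  map_one : γ 1 = y
  mapsTo : MapsTo γ (Icc 0 1) U
  isIndefiniteIntegralOn : IsIndefiniteIntegralOn γ 0 1
  eVariationOn_le : eVariationOn γ (Icc 0 1) ≤ ENNReal.ofReal (M * ‖x - y‖)

theorem IsWhitneyPath.dist_le {U : Set E} {M : ℝ} {x y : E} {γ : ℝ → E}
    (h : IsWhitneyPath U M x y γ) (hM : 0 ≤ M) {s : ℝ} (hs : s ∈ Icc (0 : ℝ) 1) :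
    dist (γ s) x ≤ M * dist x y := by
  have := (eVariationOn.edist_le γ hs (left_mem_Icc.2 zero_le_one)).trans h.eVariationOn_le
  rwa [h.map_zero, ← dist_eq_norm, edist_le_ofReal (by positivity)] at this

section Whitney

variable {P : Finset ℝ} {U : Set E} {M : ℝ} {u : ℝ → E} {γ : E → E → ℝ → E} {a b p q t : ℝ}

theorem Finset.IsConsecutive.eqOn_interpolate (h : P.IsConsecutive p q)
    (hpath : IsWhitneyPath U M (u p) (u q) (γ (u p) (u q))) :
    EqOn (interpolate P u γ) (γ (u p) (u q) ∘ fun τ => (τ - p) / (q - p)) (Set.Icc p q) := by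
  intro τ hτ
  rcases eq_endpoints_or_mem_Ioo_of_mem_Icc hτ with rfl | rfl | hτ'
  · simp [interpolate_of_mem h.left_mem, hpath.map_zero]
  · simp [interpolate_of_mem h.right_mem, div_self (sub_ne_zero.2 h.lt.ne'), hpath.map_one]
  · simp [interpolate, h.notMem hτ', h.lowerNeighbor_eq hτ', h.upperNeighbor_eq hτ']

variable (hPU : ∀ x ∈ P, u x ∈ U) (hγ : ∀ x ∈ U, ∀ y ∈ U, IsWhitneyPath U M x y (γ x y))
include hPU hγ

theorem mapsTo_interpolate (ha : a ∈ P) (hb : b ∈ P) : MapsTo (interpolate P u γ) (Icc a b) U := by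
  intro t ht
  by_cases htP : t ∈ P
  · rw [interpolate_of_mem htP]
    exact hPU t htP
  obtain ⟨h, ht'⟩ := P.isConsecutive_neighbors htP ha ht.1 hb ht.2
  have hpath := hγ _ (hPU _ h.left_mem) _ (hPU _ h.right_mem)
  rw [h.eqOn_interpolate hpath (Ioo_subset_Icc_self ht')]
  exact hpath.mapsTo (sub_div_sub_mem_Icc_zero_one h.lt (Ioo_subset_Icc_self ht'))

theorem isIndefiniteIntegralOn_interpolate (ha : a ∈ P) (hb : b ∈ P) (hab : a ≤ b) :
    IsIndefiniteIntegralOn (interpolate P u γ) a b := by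
  refine P.rel_of_isConsecutive (R := IsIndefiniteIntegralOn (interpolate P u γ))
    (IsIndefiniteIntegralOn.refl _) (fun x y z hxy hyz h₁ h₂ => h₁.trans h₂ hxy hyz)
    (fun p q h => ?_) ha hb hab
  have hpath := hγ _ (hPU _ h.left_mem) _ (hPU _ h.right_mem)
  exact (hpath.isIndefiniteIntegralOn.comp_sub_div_sub h.lt).congr (h.eqOn_interpolate hpath).symm

theorem eVariationOn_interpolate_le (hM : 0 ≤ M) (ha : a ∈ P) (hb : b ∈ P) (hab : a ≤ b) :
    eVariationOn (interpolate P u γ) (Icc a b) ≤ ENNReal.ofReal M * eVariationOn u (Icc a b) := by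
  refine P.rel_of_isConsecutive (R := fun x y => eVariationOn (interpolate P u γ) (Icc x y) ≤
      ENNReal.ofReal M * eVariationOn u (Icc x y)) (fun x => ?_) (fun x y z hxy hyz h₁ h₂ => ?_)
    (fun p q h => ?_) ha hb hab
  · rw [Icc_self, eVariationOn.subsingleton _ subsingleton_singleton]
    exact zero_le
  · rw [← eVariationOn_Icc_add_Icc _ hxy hyz, ← eVariationOn_Icc_add_Icc _ hxy hyz, mul_add]
    exact add_le_add h₁ h₂
  have hpath := hγ _ (hPU _ h.left_mem) _ (hPU _ h.right_mem)
  have hφ : MonotoneOn (fun τ => (τ - p) / (q - p)) (Icc p q) := fun x _ y _ hxy =>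
    div_le_div_of_nonneg_right (sub_le_sub_right hxy p) (sub_nonneg.2 h.lt.le)
  calc eVariationOn (interpolate P u γ) (Icc p q)
      = eVariationOn (γ (u p) (u q) ∘ fun τ => (τ - p) / (q - p)) (Icc p q) :=
        eVariationOn.eq_of_eqOn (h.eqOn_interpolate hpath)
    _ ≤ eVariationOn (γ (u p) (u q)) (Icc 0 1) :=
        eVariationOn.comp_le_of_monotoneOn _ _ hφ fun τ hτ => sub_div_sub_mem_Icc_zero_one h.lt hτ
    _ ≤ ENNReal.ofReal (M * ‖u p - u q‖) := hpath.eVariationOn_le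
    _ = ENNReal.ofReal M * edist (u p) (u q) := by
        rw [ENNReal.ofReal_mul hM, edist_dist, dist_eq_norm]
    _ ≤ ENNReal.ofReal M * eVariationOn u (Icc p q) := by
        gcongr
        exact eVariationOn.edist_le u (left_mem_Icc.2 h.lt.le) (right_mem_Icc.2 h.lt.le)

theorem dist_interpolate_le (hM : 0 ≤ M) (hu : BoundedVariationOn u (Icc a b))
    (hP : ↑P ⊆ Icc a b) (ha : a ∈ P) (hb : b ∈ P) (ht : t ∈ Icc a b) (htP : t ∉ P) :
    dist (interpolate P u γ t) (u t) ≤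
      (M + 1) * variationOnFromTo u (Icc a b) (P.lowerNeighbor t) (P.upperNeighbor t) := by
  obtain ⟨h, ht'⟩ := P.isConsecutive_neighbors htP ha ht.1 hb ht.2
  set p := P.lowerNeighbor t
  set q := P.upperNeighbor t
  have hpath := hγ _ (hPU _ h.left_mem) _ (hPU _ h.right_mem)
  have hV : ∀ x ∈ Icc p q, ∀ y ∈ Icc p q,
      dist (u x) (u y) ≤ variationOnFromTo u (Icc a b) p q := by
    have hpq : Icc p q ⊆ Icc a b := Icc_subset_Icc (hP h.left_mem).1 (hP h.right_mem).2
    intro x hx y hy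
    rw [variationOnFromTo.eq_of_le _ _ h.lt.le]
    exact (hu.mono inter_subset_left).dist_le ⟨hpq hx, hx⟩ ⟨hpq hy, hy⟩
  have hpq := left_mem_Icc.2 h.lt.le
  have htpq := Ioo_subset_Icc_self ht'
  rw [h.eqOn_interpolate hpath htpq, Function.comp_apply]
  calc dist (γ (u p) (u q) ((t - p) / (q - p))) (u t)
      ≤ dist (γ (u p) (u q) ((t - p) / (q - p))) (u p) + dist (u p) (u t) := dist_triangle _ _ _
    _ ≤ M * dist (u p) (u q) + dist (u p) (u t) := by
        gcongr
        exact hpath.dist_le hM (sub_div_sub_mem_Icc_zero_one h.lt htpq)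
    _ ≤ M * variationOnFromTo u (Icc a b) p q + variationOnFromTo u (Icc a b) p q := by
        gcongr
        · exact hV p hpq q (right_mem_Icc.2 h.lt.le)
        · exact hV p hpq t htpq
    _ = (M + 1) * variationOnFromTo u (Icc a b) p q := by ring

end Whitney

theorem tendsto_interpolate {ι : Type*} {l : Filter ι} {P : ι → Finset ℝ} {U : Set E} {M : ℝ}
    {u : ℝ → E} {γ : E → E → ℝ → E} {a b t : ℝ} (hM : 0 ≤ M) (hu : BoundedVariationOn u (Icc a b))
    (huU : MapsTo u (Icc a b) U) (hγ : ∀ x ∈ U, ∀ y ∈ U, IsWhitneyPath U M x y (γ x y))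
    (hP : ∀ i, a ∈ P i ∧ b ∈ P i ∧ ↑(P i) ⊆ Icc a b) (ht : t ∈ Icc a b) (htP : ∀ i, t ∉ P i)
    (hlower : Tendsto (fun i => (P i).lowerNeighbor t) l (𝓝 t))
    (hupper : Tendsto (fun i => (P i).upperNeighbor t) l (𝓝 t))
    (hv : ContinuousWithinAt (variationOnFromTo u (Icc a b) a) (Icc a b) t) :
    Tendsto (fun i => interpolate (P i) u γ t) l (𝓝 (u t)) := by
  set v := variationOnFromTo u (Icc a b) a
  have hmem : ∀ i, (P i).lowerNeighbor t ∈ Icc a b ∧ (P i).upperNeighbor t ∈ Icc a b := fun i =>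
    have h := ((P i).isConsecutive_neighbors (htP i) (hP i).1 ht.1 (hP i).2.1 ht.2).1
    ⟨(hP i).2.2 h.left_mem, (hP i).2.2 h.right_mem⟩
  have hcomp : ∀ {f : ι → ℝ}, Tendsto f l (𝓝 t) → (∀ i, f i ∈ Icc a b) →
      Tendsto (fun i => v (f i)) l (𝓝 (v t)) := fun hf hfab =>
    hv.tendsto.comp (tendsto_nhdsWithin_iff.2 ⟨hf, Eventually.of_forall hfab⟩)
  have hlim : Tendsto (fun i => (M + 1) *
      (v ((P i).upperNeighbor t) - v ((P i).lowerNeighbor t))) l (𝓝 0) := by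
    simpa using ((hcomp hupper fun i => (hmem i).2).sub
      (hcomp hlower fun i => (hmem i).1)).const_mul (M + 1)
  refine tendsto_iff_dist_tendsto_zero.2 (squeeze_zero (fun _ => dist_nonneg) (fun i => ?_) hlim)
  rw [variationOnFromTo.sub_right hu.locallyBoundedVariationOn (left_mem_Icc.2 (ht.1.trans ht.2))
    (hmem i).2 (hmem i).1]
  obtain ⟨ha, hb, hPab⟩ := hP i
  exact dist_interpolate_le (fun x hx => huU (hPab hx)) hγ hM hu hPab ha hb ht (htP i)

end Interpolation

theorem stmt_9_general (m : ℕ) (a b : ℝ) (hab : a < b)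
    (U : Set (EuclideanSpace ℝ (Fin m)))
    (hWhitney : ∃ M : ℝ, 1 ≤ M ∧ ∀ u₁ ∈ U, ∀ u₂ ∈ U,
      ∃ γ : ℝ → EuclideanSpace ℝ (Fin m),
        γ 0 = u₁ ∧ γ 1 = u₂ ∧ MapsTo γ (Icc 0 1) U ∧
        (∃ g : ℝ → EuclideanSpace ℝ (Fin m), IntegrableOn g (Icc 0 1) ∧
          ∀ t ∈ Icc (0:ℝ) 1, γ t = γ 0 + ∫ s in (0:ℝ)..t, g s) ∧
        eVariationOn γ (Icc 0 1) ≤ ENNReal.ofReal (M * ‖u₁ - u₂‖))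
    (u : ℝ → EuclideanSpace ℝ (Fin m)) (humap : MapsTo u (Icc a b) U)
    (huBV : eVariationOn u (Icc a b) ≠ ⊤) :
    ∃ uk : ℕ → ℝ → EuclideanSpace ℝ (Fin m),
      (∀ k, MapsTo (uk k) (Icc a b) U ∧
        -- absolute continuity, via the fundamental theorem of calculus
        ∃ g : ℝ → EuclideanSpace ℝ (Fin m), IntegrableOn g (Icc a b) ∧
          ∀ t ∈ Icc a b, uk k t = uk k a + ∫ s in a..t, g s) ∧
      (∀ t ∈ Icc a b, Tendsto (fun k => uk k t) atTop (nhds (u t))) ∧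
      ∃ C : ℝ, ∀ k, eVariationOn (uk k) (Icc a b) ≤ ENNReal.ofReal C := by
  obtain ⟨M, hM, hW⟩ := hWhitney
  have hM₀ : 0 ≤ M := zero_le_one.trans hM
  choose! γ hγ using hW
  replace hγ : ∀ x ∈ U, ∀ y ∈ U, IsWhitneyPath U M x y (γ x y) := fun x hx y hy =>
    let ⟨h₀, h₁, hU, hint, hvar⟩ := hγ x hx y hy
    ⟨h₀, h₁, hU, hint, hvar⟩
  have hu : BoundedVariationOn u (Icc a b) := huBV
  obtain ⟨P, hP, hconv⟩ := exists_finset_seq_tendsto_neighbors hab.le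
    (variationOnFromTo.monotoneOn hu.locallyBoundedVariationOn
      (left_mem_Icc.2 hab.le)).countable_not_continuousWithinAt
  have hPU : ∀ k, ∀ x ∈ P k, u x ∈ U := fun k x hx => humap ((hP k).2.2 hx)
  refine ⟨fun k => interpolate (P k) u γ, fun k => ⟨mapsTo_interpolate (hPU k) hγ (hP k).1
    (hP k).2.1, isIndefiniteIntegralOn_interpolate (hPU k) hγ (hP k).1 (hP k).2.1 hab.le⟩,
    fun t ht => ?_, M * (eVariationOn u (Icc a b)).toReal, fun k => ?_⟩
  · rcases hconv t ht with hmem | ⟨hB, htP, hlower, hupper⟩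
    · exact tendsto_const_nhds.congr' (hmem.mono fun k hk => (interpolate_of_mem hk).symm)
    · exact tendsto_interpolate hM₀ hu humap hγ hP ht htP hlower hupper
        (by_contra fun h => hB ⟨ht, h⟩)
  · rw [ENNReal.ofReal_mul hM₀, ENNReal.ofReal_toReal huBV]
    exact eVariationOn_interpolate_le (hPU k) hγ hM₀ (hP k).1 (hP k).2.1 hab.le

/-- If `U ⊂ ℝ^m` is compact with the Whitney property, then every BV function
`u : [a,b] → U` is the pointwise (everywhere) limit of a sequence of absolutely
continuous functions `u_k : [a,b] → U` with equibounded total variation. -/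
theorem stmt_9 (m : ℕ) (a b : ℝ) (hab : a < b)
    (U : Set (EuclideanSpace ℝ (Fin m))) (hUcomp : IsCompact U)
    (hWhitney : ∃ M : ℝ, 1 ≤ M ∧ ∀ u₁ ∈ U, ∀ u₂ ∈ U,
      ∃ γ : ℝ → EuclideanSpace ℝ (Fin m),
        γ 0 = u₁ ∧ γ 1 = u₂ ∧ MapsTo γ (Icc 0 1) U ∧
        (∃ g : ℝ → EuclideanSpace ℝ (Fin m), IntegrableOn g (Icc 0 1) ∧
          ∀ t ∈ Icc (0:ℝ) 1, γ t = γ 0 + ∫ s in (0:ℝ)..t, g s) ∧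
        eVariationOn γ (Icc 0 1) ≤ ENNReal.ofReal (M * ‖u₁ - u₂‖))
    (u : ℝ → EuclideanSpace ℝ (Fin m)) (humap : MapsTo u (Icc a b) U)
    (huBV : eVariationOn u (Icc a b) ≠ ⊤) :
    ∃ uk : ℕ → ℝ → EuclideanSpace ℝ (Fin m),
      (∀ k, MapsTo (uk k) (Icc a b) U ∧
        -- absolute continuity, via the fundamental theorem of calculus
        ∃ g : ℝ → EuclideanSpace ℝ (Fin m), IntegrableOn g (Icc a b) ∧
          ∀ t ∈ Icc a b, uk k t = uk k a + ∫ s in a..t, g s) ∧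
      (∀ t ∈ Icc a b, Tendsto (fun k => uk k t) atTop (nhds (u t))) ∧
      ∃ C : ℝ, ∀ k, eVariationOn (uk k) (Icc a b) ≤ ENNReal.ofReal C :=
  stmt_9_general m a b hab U hWhitney u humap huBV
end

section
/- Let u : [a,b] → ℝ^m be absolutely continuous and define σ(t) = (t − a + Var_{[a,t]}(u)) / (b − a + Var_{[a,b]}(u)). Then σ is absolutely continuous, strictly increasing, and surjective from [a,b] onto [0,1], and its inverse φ₀ : [0,1] → [a,b] is Lipschitz continuous with constant b − a + Var_{[a,b]}(u); moreover u ∘ φ₀ is Lipschitz continuous with the same constant. -/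
/-!
Write `v t = Var_{[a,t]} u` and `M = b - a + v b`. For `a ≤ x ≤ y ≤ b` one has
`‖u y - u x‖ ≤ v y - v x ≤ ∫_x^y ‖u'‖`. The upper bound lets `v`, hence `σ`, inherit absolute
continuity from the primitive of `‖u'‖`, so `σ` is the integral of its a.e. derivative. The
identity `M (σ y - σ x) = (y - x) + (v y - v x)` shows that `σ` is strictly increasing and bounds
both `|y - x|` and `‖u y - u x‖` by `M |σ y - σ x|`: these are the Lipschitz bounds for `σ⁻¹`
and `u ∘ σ⁻¹`.
-/

open Set MeasureTheory intervalIntegral Filter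
open scoped NNReal

theorem AbsolutelyContinuousOnInterval.of_dist_le {X Y : Type*} [PseudoMetricSpace X]
    [PseudoMetricSpace Y] {f : ℝ → X} {g : ℝ → Y} {a b : ℝ}
    (hg : AbsolutelyContinuousOnInterval g a b)
    (h : ∀ x ∈ uIcc a b, ∀ y ∈ uIcc a b, dist (f x) (f y) ≤ dist (g x) (g y)) :
    AbsolutelyContinuousOnInterval f a b := by
  refine squeeze_zero' (Eventually.of_forall fun _ ↦ Finset.sum_nonneg fun _ _ ↦ dist_nonneg)
    ?_ hg
  filter_upwards [mem_inf_of_right (mem_principal_self _)] with E hE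
  exact Finset.sum_le_sum fun i hi ↦ h _ (hE.1 i hi).1 _ (hE.1 i hi).2

theorem AbsolutelyContinuousOnInterval.exists_integrableOn_eq_add_integral {f : ℝ → ℝ}
    {a b : ℝ} (hab : a ≤ b) (hf : AbsolutelyContinuousOnInterval f a b) :
    ∃ g : ℝ → ℝ, IntegrableOn g (Icc a b) ∧
      ∀ t ∈ Icc a b, f t = f a + ∫ s in a..t, g s := by
  refine ⟨deriv f, (integrableOn_Icc_iff_integrableOn_Ioc).2
    ((intervalIntegrable_iff_integrableOn_Ioc_of_le hab).1 hf.intervalIntegrable_deriv),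
    fun t ht ↦ ?_⟩
  rw [(hf.mono (uIcc_subset_uIcc_left (mem_uIcc_of_le ht.1 ht.2))).integral_deriv_eq_sub]
  ring

theorem lipschitzOnWith_comp_invFunOn {β α : Type*} [LinearOrder β] [Nonempty β]
    [PseudoMetricSpace α]
    {f : β → α} {σ : β → ℝ} {s : Set β} {K : ℝ≥0}
    (h : ∀ x ∈ s, ∀ y ∈ s, x ≤ y → dist (f x) (f y) ≤ K * (σ y - σ x)) :
    LipschitzOnWith K (f ∘ Function.invFunOn σ s) (σ '' s) := by
  have hsymm : ∀ x ∈ s, ∀ y ∈ s, dist (f x) (f y) ≤ K * dist (σ x) (σ y) := by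
    intro x hx y hy
    wlog hxy : x ≤ y generalizing x y
    · rw [dist_comm, dist_comm (σ x)]
      exact this y hy x hx (le_of_not_ge hxy)
    refine (h x hx y hy hxy).trans ?_
    gcongr
    rw [Real.dist_eq, abs_sub_comm]
    exact le_abs_self _
  rw [lipschitzOnWith_iff_dist_le_mul]
  rintro _ ⟨x, hx, rfl⟩ _ ⟨y, hy, rfl⟩
  have hx' := Function.invFunOn_eq (f := σ) ⟨x, hx, rfl⟩
  have hy' := Function.invFunOn_eq (f := σ) ⟨y, hy, rfl⟩
  simpa only [Function.comp_apply, hx', hy'] using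
    hsymm _ (Function.invFunOn_mem (f := σ) ⟨x, hx, rfl⟩) _
      (Function.invFunOn_mem (f := σ) ⟨y, hy, rfl⟩)

section Variation

variable {E : Type*} [NormedAddCommGroup E] [NormedSpace ℝ E] {f f' : ℝ → E} {a b : ℝ}

theorem sub_eq_integral_of_eq_add_integral (hf' : IntegrableOn f' (Icc a b))
    (hf : ∀ t ∈ Icc a b, f t = f a + ∫ s in a..t, f' s) {x y : ℝ} (hx : x ∈ Icc a b)
    (hy : y ∈ Icc a b) : f y - f x = ∫ s in x..y, f' s := by
  have hint : ∀ t ∈ Icc a b, IntervalIntegrable f' volume a t := fun t ht ↦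
    (hf'.mono_set (uIcc_subset_Icc (left_mem_Icc.2 (hx.1.trans hx.2)) ht)).intervalIntegrable
  rw [hf y hy, hf x hx, ← integral_interval_sub_left (hint y hy) (hint x hx)]
  abel

theorem eVariationOn_le_ofReal_integral_norm (hf' : IntegrableOn f' (Icc a b))
    (hf : ∀ x ∈ Icc a b, ∀ y ∈ Icc a b, f y - f x = ∫ s in x..y, f' s) :
    eVariationOn f (Icc a b) ≤ ENNReal.ofReal (∫ s in a..b, ‖f' s‖) := by
  have hint : ∀ x ∈ Icc a b, ∀ y ∈ Icc a b, IntervalIntegrable (‖f' ·‖) volume x y :=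
    fun x hx y hy ↦ IntegrableOn.intervalIntegrable (hf'.mono_set (uIcc_subset_Icc hx hy)).norm
  refine iSup_le fun ⟨n, q, hq, hqs⟩ ↦ ?_
  have hab : a ≤ b := (hqs 0).1.trans (hqs 0).2
  calc ∑ i ∈ Finset.range n, edist (f (q (i + 1))) (f (q i))
      ≤ ∑ i ∈ Finset.range n, ENNReal.ofReal (∫ s in q i..q (i + 1), ‖f' s‖) := by
        gcongr with i
        rw [edist_dist, dist_eq_norm, hf _ (hqs i) _ (hqs (i + 1))]
        exact ENNReal.ofReal_le_ofReal (norm_integral_le_integral_norm (hq (Nat.le_succ i)))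
    _ = ENNReal.ofReal (∫ s in q 0..q n, ‖f' s‖) := by
        rw [← ENNReal.ofReal_sum_of_nonneg fun i _ ↦
            integral_nonneg (hq (Nat.le_succ i)) fun _ _ ↦ norm_nonneg _,
          sum_integral_adjacent_intervals fun i _ ↦ hint _ (hqs i) _ (hqs (i + 1))]
    _ ≤ ENNReal.ofReal (∫ s in a..b, ‖f' s‖) := by
        gcongr
        exact integral_mono_interval (hqs 0).1 (hq (Nat.zero_le n)) (hqs n).2
          (Eventually.of_forall fun _ ↦ norm_nonneg _) (hint a ⟨le_rfl, hab⟩ b ⟨hab, le_rfl⟩)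

theorem boundedVariationOn_of_sub_eq_integral (hf' : IntegrableOn f' (Icc a b))
    (hf : ∀ x ∈ Icc a b, ∀ y ∈ Icc a b, f y - f x = ∫ s in x..y, f' s) :
    BoundedVariationOn f (Icc a b) :=
  ne_top_of_le_ne_top ENNReal.ofReal_ne_top (eVariationOn_le_ofReal_integral_norm hf' hf)

end Variation

theorem toReal_eVariationOn_Icc_sub {E : Type*} [PseudoEMetricSpace E] (f : ℝ → E)
    {a x y : ℝ} (hax : a ≤ x) (hxy : x ≤ y) (hf : BoundedVariationOn f (Icc a y)) :
    (eVariationOn f (Icc a y)).toReal - (eVariationOn f (Icc a x)).toReal =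
      (eVariationOn f (Icc x y)).toReal := by
  have hadd := eVariationOn.Icc_add_Icc f (s := univ) hax hxy (mem_univ x)
  simp only [univ_inter] at hadd
  rw [← hadd, ENNReal.toReal_add (ne_top_of_le_ne_top hf (eVariationOn.mono f
      (Icc_subset_Icc_right hxy))) (ne_top_of_le_ne_top hf (eVariationOn.mono f
      (Icc_subset_Icc_left hax)))]
  ring

section Clock

variable {E : Type*} [PseudoMetricSpace E] {u : ℝ → E} {a b : ℝ}

noncomputable def variationClock (u : ℝ → E) (a b t : ℝ) : ℝ :=
  (t - a + (eVariationOn u (Icc a t)).toReal) / (b - a + (eVariationOn u (Icc a b)).toReal)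

theorem sub_add_toReal_eVariationOn_pos (u : ℝ → E) (hab : a < b) :
    0 < b - a + (eVariationOn u (Icc a b)).toReal := by
  have := (eVariationOn u (Icc a b)).toReal_nonneg
  linarith

theorem variationClock_left : variationClock u a b a = 0 := by
  simp [variationClock]

theorem variationClock_right (hab : a < b) : variationClock u a b b = 1 :=
  div_self (sub_add_toReal_eVariationOn_pos u hab).ne'

theorem mul_variationClock_sub (hab : a < b) (hu : BoundedVariationOn u (Icc a b)) {x y : ℝ}
    (hax : a ≤ x) (hxy : x ≤ y) (hyb : y ≤ b) :
    (b - a + (eVariationOn u (Icc a b)).toReal) *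
        (variationClock u a b y - variationClock u a b x) =
      y - x + (eVariationOn u (Icc x y)).toReal := by
  have hM := (sub_add_toReal_eVariationOn_pos u hab).ne'
  rw [variationClock, variationClock, ← sub_div, mul_div_cancel₀ _ hM,
    ← toReal_eVariationOn_Icc_sub u hax hxy
      (ne_top_of_le_ne_top hu (eVariationOn.mono u (Icc_subset_Icc_right hyb)))]
  ring

theorem variationClock_strictMonoOn (hab : a < b) (hu : BoundedVariationOn u (Icc a b)) :
    StrictMonoOn (variationClock u a b) (Icc a b) := by
  intro x hx y hy hxy
  have hprod : 0 < (b - a + (eVariationOn u (Icc a b)).toReal) *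
      (variationClock u a b y - variationClock u a b x) := by
    rw [mul_variationClock_sub hab hu hx.1 hxy.le hy.2]
    linarith [(eVariationOn u (Icc x y)).toReal_nonneg]
  exact sub_pos.1 (pos_of_mul_pos_right hprod (sub_add_toReal_eVariationOn_pos u hab).le)

theorem image_variationClock_Icc (hab : a < b) (hu : BoundedVariationOn u (Icc a b))
    (hcont : ContinuousOn (variationClock u a b) (Icc a b)) :
    variationClock u a b '' Icc a b = Icc 0 1 := by
  rw [hcont.image_Icc_of_monotoneOn hab.le (variationClock_strictMonoOn hab hu).monotoneOn,
    variationClock_left, variationClock_right hab]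

theorem dist_le_mul_variationClock_sub (hab : a < b) (hu : BoundedVariationOn u (Icc a b))
    {x y : ℝ} (hx : x ∈ Icc a b) (hy : y ∈ Icc a b) (hxy : x ≤ y) :
    dist x y ≤ (b - a + (eVariationOn u (Icc a b)).toReal) *
      (variationClock u a b y - variationClock u a b x) := by
  rw [mul_variationClock_sub hab hu hx.1 hxy hy.2, Real.dist_eq, abs_sub_comm,
    abs_of_nonneg (sub_nonneg.2 hxy)]
  exact le_add_of_nonneg_right ENNReal.toReal_nonneg

theorem dist_apply_le_mul_variationClock_sub (hab : a < b) (hu : BoundedVariationOn u (Icc a b))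
    {x y : ℝ} (hx : x ∈ Icc a b) (hy : y ∈ Icc a b) (hxy : x ≤ y) :
    dist (u x) (u y) ≤ (b - a + (eVariationOn u (Icc a b)).toReal) *
      (variationClock u a b y - variationClock u a b x) := by
  rw [mul_variationClock_sub hab hu hx.1 hxy hy.2]
  have hvar : dist (u x) (u y) ≤ (eVariationOn u (Icc x y)).toReal := by
    rw [dist_edist]
    exact ENNReal.toReal_mono (ne_top_of_le_ne_top hu (eVariationOn.mono u
      (Icc_subset_Icc hx.1 hy.2))) (eVariationOn.edist_le u (left_mem_Icc.2 hxy)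
      (right_mem_Icc.2 hxy))
  linarith

end Clock

section AbsolutelyContinuous

variable {E : Type*} [NormedAddCommGroup E] [NormedSpace ℝ E] {u u' : ℝ → E} {a b : ℝ}

theorem absolutelyContinuousOnInterval_toReal_eVariationOn (hab : a ≤ b)
    (hu' : IntegrableOn u' (Icc a b))
    (hu : ∀ x ∈ Icc a b, ∀ y ∈ Icc a b, u y - u x = ∫ s in x..y, u' s) :
    AbsolutelyContinuousOnInterval (fun t ↦ (eVariationOn u (Icc a t)).toReal) a b := by
  have hint : IntervalIntegrable (‖u' ·‖) volume a b :=
    IntegrableOn.intervalIntegrable (by rw [uIcc_of_le hab]; exact hu'.norm)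
  have hBV := boundedVariationOn_of_sub_eq_integral hu' hu
  refine (hint.absolutelyContinuousOnInterval_intervalIntegral left_mem_uIcc).of_dist_le ?_
  rw [uIcc_of_le hab]
  intro x hx y hy
  wlog hxy : x ≤ y generalizing x y
  · rw [dist_comm, dist_comm (∫ s in a..x, ‖u' s‖)]
    exact this y hy x hx (le_of_not_ge hxy)
  have hxy_sub : Icc x y ⊆ Icc a b := Icc_subset_Icc hx.1 hy.2
  have hvar : (eVariationOn u (Icc x y)).toReal ≤ ∫ s in x..y, ‖u' s‖ :=
    ENNReal.toReal_le_of_le_ofReal (integral_nonneg hxy fun _ _ ↦ norm_nonneg _)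
      (eVariationOn_le_ofReal_integral_norm (hu'.mono_set hxy_sub)
        fun s hs t ht ↦ hu s (hxy_sub hs) t (hxy_sub ht))
  have hint_sub : ∀ t ∈ Icc a b, IntervalIntegrable (‖u' ·‖) volume a t := fun t ht ↦
    hint.mono_set (by rw [uIcc_of_le hab, uIcc_of_le ht.1]; exact Icc_subset_Icc_right ht.2)
  rw [Real.dist_eq, Real.dist_eq, abs_sub_comm, abs_sub_comm (∫ s in a..x, ‖u' s‖),
    toReal_eVariationOn_Icc_sub u hx.1 hxy
      (ne_top_of_le_ne_top hBV (eVariationOn.mono u (Icc_subset_Icc_right hy.2))),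
    integral_interval_sub_left (hint_sub y hy) (hint_sub x hx), ENNReal.abs_toReal]
  exact hvar.trans (le_abs_self _)

theorem absolutelyContinuousOnInterval_variationClock (hab : a ≤ b)
    (hu' : IntegrableOn u' (Icc a b))
    (hu : ∀ x ∈ Icc a b, ∀ y ∈ Icc a b, u y - u x = ∫ s in x..y, u' s) :
    AbsolutelyContinuousOnInterval (variationClock u a b) a b := by
  have hlin : AbsolutelyContinuousOnInterval (fun t : ℝ ↦ t - a) a b :=
    ContDiffOn.absolutelyContinuousOnInterval (by fun_prop)
  have hsum := (hlin.add (absolutelyContinuousOnInterval_toReal_eVariationOn hab hu' hu)).const_mul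
    (b - a + (eVariationOn u (Icc a b)).toReal)⁻¹
  convert hsum using 1
  ext t
  simp [variationClock, div_eq_inv_mul]

end AbsolutelyContinuous

/-- For an absolutely continuous `u : [a,b] → ℝ^m`, the normalized clock
`σ(t) = (t - a + Var_{[a,t]}(u)) / (b - a + Var_{[a,b]}(u))` is absolutely
continuous, strictly increasing, surjective onto `[0,1]`, its inverse `φ₀` is
Lipschitz with constant `b - a + Var_{[a,b]}(u)`, and `u ∘ φ₀` is Lipschitz
with the same constant. -/
theorem stmt_11 (m : ℕ) (a b : ℝ) (hab : a < b)
    (u : ℝ → EuclideanSpace ℝ (Fin m))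
    -- absolute continuity of u, via the fundamental theorem of calculus
    (hAC : ∃ u' : ℝ → EuclideanSpace ℝ (Fin m), IntegrableOn u' (Icc a b) ∧
      ∀ t ∈ Icc a b, u t = u a + ∫ s in a..t, u' s)
    (σ : ℝ → ℝ)
    (hσdef : ∀ t, σ t =
      (t - a + (eVariationOn u (Icc a t)).toReal) /
        (b - a + (eVariationOn u (Icc a b)).toReal)) :
    (∃ g : ℝ → ℝ, IntegrableOn g (Icc a b) ∧
      ∀ t ∈ Icc a b, σ t = σ a + ∫ s in a..t, g s) ∧
    StrictMonoOn σ (Icc a b) ∧ σ '' (Icc a b) = Icc 0 1 ∧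
    ∃ φ₀ : ℝ → ℝ,
      (∀ t ∈ Icc a b, φ₀ (σ t) = t) ∧ (∀ s ∈ Icc (0:ℝ) 1, σ (φ₀ s) = s) ∧
      LipschitzOnWith (Real.toNNReal (b - a + (eVariationOn u (Icc a b)).toReal))
        φ₀ (Icc 0 1) ∧
      LipschitzOnWith (Real.toNNReal (b - a + (eVariationOn u (Icc a b)).toReal))
        (u ∘ φ₀) (Icc 0 1) := by
  obtain ⟨u', hu', hu⟩ := hAC
  obtain rfl : σ = variationClock u a b := funext hσdef
  have hsub : ∀ x ∈ Icc a b, ∀ y ∈ Icc a b, u y - u x = ∫ s in x..y, u' s :=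
    fun x hx y hy ↦ sub_eq_integral_of_eq_add_integral hu' hu hx hy
  have hBV := boundedVariationOn_of_sub_eq_integral hu' hsub
  have hAC := absolutelyContinuousOnInterval_variationClock hab.le hu' hsub
  have hmono := variationClock_strictMonoOn hab hBV
  have hcont : ContinuousOn (variationClock u a b) (Icc a b) := by
    simpa only [uIcc_of_le hab.le] using hAC.continuousOn
  have himage := image_variationClock_Icc hab hBV hcont
  have hM := Real.coe_toNNReal _ (sub_add_toReal_eVariationOn_pos u hab).le
  refine ⟨hAC.exists_integrableOn_eq_add_integral hab.le, hmono, himage,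
    Function.invFunOn (variationClock u a b) (Icc a b),
    fun t ht ↦ hmono.injOn.leftInvOn_invFunOn ht,
    fun s hs ↦ Function.invFunOn_eq (himage.symm ▸ hs : s ∈ _ '' Icc a b), ?_, ?_⟩ <;>
    rw [← himage]
  · exact lipschitzOnWith_comp_invFunOn (f := id) fun x hx y hy hxy ↦ by
      simpa only [hM, id] using dist_le_mul_variationClock_sub hab hBV hx hy hxy
  · exact lipschitzOnWith_comp_invFunOn fun x hx y hy hxy ↦ by
      simpa only [hM] using dist_apply_le_mul_variationClock_sub hab hBV hx hy hxy
end
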